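/- arXiv:1803.10953 — 2 statements merged into one kernel-verified Lean document; each statement's English description precedes it below -/
import Mathlib

section
/- Rosen-style characterization of WAML^n over finite models: a first-order L¹_n-formula α(x) is invariant under wa^n-bisimulation between finite n-models if and only if there is a WAML formula φ such that α(x) and ST_x(φ) are equivalent over all finite n-models (i.e., for every finite n-model M and world w, M ⊨ α[w] iff M ⊨ ST_x(φ)[w]). -/
/-!
Standard translations are invariant under wa^n-bisimulation, which gives one direction.

Conversely, let `α` have quantifier rank `q` and mention only letters `< K`, and put `l = 2 ^ q`.
Over finite models `α` depends only on the depth-`l` bisimulation type of the point over the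
letters `< K`; there are finitely many such types, each defined by a characteristic WAML formula,
and `φ` is the disjunction of those of the types satisfying `α`. Two finite pointed models of the
same type have bisimilar depth-`l` unravelings once the letters `≥ K` are erased, so it suffices to see that `α` has the same truth
value at `w` in `M` as at the root of the unraveling of depth `l`. Attaching a copy of `M` below
each leaf of the unraveling gives a finite model bisimilar to `M`; in `q + 2` disjoint copies of
its disjoint union with the plain unraveling, the two roots have isomorphic
`2 ^ q`-neighbourhoods, and Otto's Ehrenfeucht–Fraïssé strategy (answer near earlier moves through
the local isomorphism or in the matching copy, and far from them in a fresh copy) shows that they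
satisfy the same formulas of rank `q`.
-/

namespace WAML

/-- The language of WAML: atoms, negation, conjunction, and the (diagonal) box. -/
inductive Formula : Type
  | atom : ℕ → Formula
  | neg : Formula → Formula
  | and : Formula → Formula → Formula
  | box : Formula → Formula

namespace Formula

def imp (φ ψ : Formula) : Formula := neg (and φ (neg ψ))
def or (φ ψ : Formula) : Formula := neg (and (neg φ) (neg ψ))
def dia (φ : Formula) : Formula := neg (box (neg φ))
def bot : Formula := and (atom 0) (neg (atom 0))

/-- The set of propositional letters occurring in a formula. -/
def letters : Formula → Set ℕ
  | atom p => {p}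
  | neg φ => letters φ
  | and φ ψ => letters φ ∪ letters ψ
  | box φ => letters φ

end Formula

/-- Conjunction of a list of formulas. -/
def conjList : List Formula → Formula
  | [] => Formula.neg Formula.bot
  | [φ] => φ
  | φ :: ψ :: rest => Formula.and φ (conjList (ψ :: rest))

/-- Disjunction of a list of formulas. -/
def disjList : List Formula → Formula
  | [] => Formula.bot
  | [φ] => φ
  | φ :: ψ :: rest => Formula.or φ (disjList (ψ :: rest))

/-- ⋁_{0 ≤ i < j ≤ n} (φ_i ∧ φ_j) -/
def pairDisj (n : ℕ) (φ : Fin (n+1) → Formula) : Formula :=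
  disjList (((List.finRange (n+1)).product (List.finRange (n+1))).filterMap
    (fun p => if p.1 < p.2 then some (Formula.and (φ p.1) (φ p.2)) else none))

/-- The axiom (scheme) K_n : □φ₀ ∧ ⋯ ∧ □φ_n → □⋁_{0 ≤ i < j ≤ n} (φ_i ∧ φ_j). -/
def KnAxiom (n : ℕ) (φ : Fin (n+1) → Formula) : Formula :=
  Formula.imp (conjList ((List.finRange (n+1)).map (fun i => Formula.box (φ i))))
    (Formula.box (pairDisj n φ))

/-- A propositional tautology (including all substitution instances): a formula true under
every valuation of formulas respecting ¬ and ∧. -/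
def Tautology (φ : Formula) : Prop :=
  ∀ v : Formula → Prop,
    (∀ ψ, v (Formula.neg ψ) ↔ ¬ v ψ) →
    (∀ ψ χ, v (Formula.and ψ χ) ↔ v ψ ∧ v χ) →
    v φ

/-- The proof system 𝕂_n: propositional tautologies, K_n, modus ponens, necessitation, RM. -/
inductive KProof (n : ℕ) : Formula → Prop
  | taut {φ} : Tautology φ → KProof n φ
  | kn (φ : Fin (n+1) → Formula) : KProof n (KnAxiom n φ)
  | mp {φ ψ} : KProof n (Formula.imp φ ψ) → KProof n φ → KProof n ψ
  | nec {φ} : KProof n φ → KProof n (Formula.box φ)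
  | rm {φ ψ} : KProof n (Formula.imp φ ψ) →
      KProof n (Formula.imp (Formula.box φ) (Formula.box ψ))

/-- An n-model: a nonempty set of worlds, an (n+1)-ary relation, a valuation. -/
structure NModel (n : ℕ) where
  World : Type
  nonempty : Nonempty World
  R : World → (Fin n → World) → Prop
  V : World → ℕ → Prop

/-- Diagonal semantics. -/
def Sat {n : ℕ} (M : NModel n) : M.World → Formula → Prop
  | w, .atom p => M.V w p
  | w, .neg φ => ¬ Sat M w φ
  | w, .and φ ψ => Sat M w φ ∧ Sat M w ψ
  | w, .box φ => ∀ v : Fin n → M.World, M.R w v → ∃ i, Sat M (v i) φ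

/-- wa^n-bisimulation between two n-models. -/
def IsBisim {n : ℕ} (M M' : NModel n) (Z : M.World → M'.World → Prop) : Prop :=
  (∃ w w', Z w w') ∧
  (∀ w w', Z w w' → ∀ p, M.V w p ↔ M'.V w' p) ∧
  (∀ w w' (v : Fin n → M.World), Z w w' → M.R w v →
    ∃ v' : Fin n → M'.World, M'.R w' v' ∧ ∀ j, ∃ i, Z (v i) (v' j)) ∧
  (∀ w w' (v' : Fin n → M'.World), Z w w' → M'.R w' v' →
    ∃ v : Fin n → M.World, M.R w v ∧ ∀ i, ∃ j, Z (v i) (v' j))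

/-- wa^n-bisimilarity of pointed n-models. -/
def Bisimilar {n : ℕ} (M M' : NModel n) (w : M.World) (w' : M'.World) : Prop :=
  ∃ Z, IsBisim M M' Z ∧ Z w w'

/-- Image-finiteness: each world has finitely many successor n-tuples. -/
def ImageFinite {n : ℕ} (M : NModel n) : Prop :=
  ∀ w : M.World, {v : Fin n → M.World | M.R w v}.Finite

/-- First-order correspondence language L¹_n: formulas with free variables among Fin k
(de Bruijn style, `all` binds the last variable). -/
inductive FO (n : ℕ) : ℕ → Type
  | pred {k} : ℕ → Fin k → FO n k
  | rel {k} : (Fin (n+1) → Fin k) → FO n k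
  | eq {k} : Fin k → Fin k → FO n k
  | fal {k} : FO n k
  | not {k} : FO n k → FO n k
  | and {k} : FO n k → FO n k → FO n k
  | or {k} : FO n k → FO n k → FO n k
  | imp {k} : FO n k → FO n k → FO n k
  | all {k} : FO n (k+1) → FO n k

/-- Realization of first-order formulas in an n-model (seen as an L¹_n-structure). -/
def FO.Realize {n : ℕ} (M : NModel n) : ∀ {k}, FO n k → (Fin k → M.World) → Prop
  | _, .pred p x, a => M.V (a x) p
  | _, .rel ts, a => M.R (a (ts 0)) (fun i => a (ts i.succ))
  | _, .eq x y, a => a x = a y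
  | _, .fal, _ => False
  | _, .not φ, a => ¬ FO.Realize M φ a
  | _, .and φ ψ, a => FO.Realize M φ a ∧ FO.Realize M ψ a
  | _, .or φ ψ, a => FO.Realize M φ a ∨ FO.Realize M ψ a
  | _, .imp φ ψ, a => FO.Realize M φ a → FO.Realize M ψ a
  | _, .all φ, a => ∀ x, FO.Realize M φ (Fin.snoc a x)

/-- Quantifier rank. -/
def FO.qr {n : ℕ} : ∀ {k}, FO n k → ℕ
  | _, .pred _ _ => 0
  | _, .rel _ => 0
  | _, .eq _ _ => 0
  | _, .fal => 0
  | _, .not φ => φ.qr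
  | _, .and φ ψ => max φ.qr ψ.qr
  | _, .or φ ψ => max φ.qr ψ.qr
  | _, .imp φ ψ => max φ.qr ψ.qr
  | _, .all φ => φ.qr + 1

/-- Renaming of free variables. -/
def FO.rename {n : ℕ} : ∀ {k k'}, (Fin k → Fin k') → FO n k → FO n k'
  | _, _, f, .pred p x => .pred p (f x)
  | _, _, f, .rel ts => .rel (fun i => f (ts i))
  | _, _, f, .eq x y => .eq (f x) (f y)
  | _, _, _, .fal => .fal
  | _, _, f, .not φ => .not (φ.rename f)
  | _, _, f, .and φ ψ => .and (φ.rename f) (ψ.rename f)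
  | _, _, f, .or φ ψ => .or (φ.rename f) (ψ.rename f)
  | _, _, f, .imp φ ψ => .imp (φ.rename f) (ψ.rename f)
  | _, _, f, .all φ =>
      .all (φ.rename (fun j => Fin.lastCases (Fin.last _) (fun a => (f a).castSucc) j))

/-- A block of m universal quantifiers (binding the last m variables). -/
def FO.alls {n k : ℕ} : ∀ (m : ℕ), FO n (k + m) → FO n k
  | 0, φ => φ
  | m+1, φ => FO.alls m φ.all

/-- Disjunction of a list of first-order formulas. -/
def FO.disjList {n k : ℕ} : List (FO n k) → FO n k
  | [] => .fal
  | [φ] => φ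
  | φ :: ψ :: rest => .or φ (FO.disjList (ψ :: rest))

/-- The standard translation ST_x (with x the unique free variable). -/
def ST (n : ℕ) : Formula → FO n 1
  | .atom p => .pred p 0
  | .neg φ => .not (ST n φ)
  | .and φ ψ => .and (ST n φ) (ST n ψ)
  | .box φ =>
      let ψ := ST n φ
      FO.alls n (FO.imp
        (.rel (Fin.cases (Fin.castAdd n (0 : Fin 1)) (fun i => Fin.natAdd 1 i)))
        (FO.disjList ((List.finRange n).map
          (fun i => ψ.rename (fun _ => Fin.natAdd 1 i)))))

/-- α(x) (one free variable) is invariant under wa^n-bisimulation. -/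
def BisimInvariant (n : ℕ) (α : FO n 1) : Prop :=
  ∀ (M N : NModel n) (Z : M.World → N.World → Prop) (w : M.World) (v : N.World),
    IsBisim M N Z → Z w v →
    (FO.Realize M α (fun _ => w) ↔ FO.Realize N α (fun _ => v))

/-- α(x) is invariant under wa^n-bisimulation between finite n-models. -/
def BisimInvariantFin (n : ℕ) (α : FO n 1) : Prop :=
  ∀ (M N : NModel n) (Z : M.World → N.World → Prop) (w : M.World) (v : N.World),
    Finite M.World → Finite N.World → IsBisim M N Z → Z w v →
    (FO.Realize M α (fun _ => w) ↔ FO.Realize N α (fun _ => v))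

/-- Admissible sequences for the unraveling of M around w. The first entry is
((w,…,w), 1) (index 0 in 0-based counting) and consecutive entries are related by R. -/
def GoodSeq {n : ℕ} [NeZero n] (M : NModel n) (w : M.World)
    (s : List ((Fin n → M.World) × Fin n)) : Prop :=
  (∃ rest, s = ((fun _ => w), (0 : Fin n)) :: rest) ∧
  List.Chain' (fun a b => M.R (a.1 a.2) b.1) s

/-- The world of M corresponding to a sequence: v⃗_m[i_m] (and w for the empty list). -/
def rmap {n : ℕ} (M : NModel n) (w : M.World)
    (s : List ((Fin n → M.World) × Fin n)) : M.World :=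
  match s.getLast? with
  | some a => a.1 a.2
  | none => w

/-- The unraveling M_w of M around w. -/
def Unravel {n : ℕ} [NeZero n] (M : NModel n) (w : M.World) : NModel n where
  World := { s : List ((Fin n → M.World) × Fin n) // GoodSeq M w s }
  nonempty := ⟨⟨[((fun _ => w), 0)], ⟨⟨[], rfl⟩, List.isChain_singleton _⟩⟩⟩
  R := fun s₀ t =>
    M.R (rmap M w s₀.val) (fun i => rmap M w (t i).val) ∧
    ∀ i, ∃ a, (t i).val = s₀.val ++ [a]
  V := fun s p => M.V (rmap M w s.val) p

/-- The root ⟨((w,…,w),1)⟩ of the unraveling. -/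
def unravelRoot {n : ℕ} [NeZero n] (M : NModel n) (w : M.World) :
    (Unravel M w).World :=
  ⟨[((fun _ => w), 0)], ⟨⟨[], rfl⟩, List.isChain_singleton _⟩⟩

/-- The bounded unraveling M_w|_l : the submodel of M_w of worlds of level at most l. -/
def UnravelB {n : ℕ} [NeZero n] (M : NModel n) (w : M.World) (l : ℕ) : NModel n where
  World := { s : List ((Fin n → M.World) × Fin n) // GoodSeq M w s ∧ s.length ≤ l + 1 }
  nonempty := ⟨⟨[((fun _ => w), 0)], ⟨⟨⟨[], rfl⟩, List.isChain_singleton _⟩, by simp⟩⟩⟩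
  R := fun s₀ t =>
    M.R (rmap M w s₀.val) (fun i => rmap M w (t i).val) ∧
    ∀ i, ∃ a, (t i).val = s₀.val ++ [a]
  V := fun s p => M.V (rmap M w s.val) p

/-- The root of the bounded unraveling. -/
def unravelBRoot {n : ℕ} [NeZero n] (M : NModel n) (w : M.World) (l : ℕ) :
    (UnravelB M w l).World :=
  ⟨[((fun _ => w), 0)], ⟨⟨⟨[], rfl⟩, List.isChain_singleton _⟩, by simp⟩⟩

/-- R^c x y : y is a member of some successor tuple of x. -/
def Rc {n : ℕ} (M : NModel n) (x y : M.World) : Prop :=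
  ∃ v : Fin n → M.World, M.R x v ∧ ∃ i, y = v i

/-- The undirected edge relation induced by R^c. -/
def Edge {n : ℕ} (M : NModel n) (x y : M.World) : Prop := Rc M x y ∨ Rc M y x

/-- There is an undirected R^c-path of length m from x to y. -/
def HasPath {n : ℕ} (M : NModel n) (x y : M.World) (m : ℕ) : Prop :=
  ∃ f : ℕ → M.World, f 0 = x ∧ f m = y ∧ ∀ i < m, Edge M (f i) (f (i+1))

/-- The distance between worlds, in ℕ ∪ {ω} (ω = ⊤ if there is no path). -/
noncomputable def dist {n : ℕ} (M : NModel n) (x y : M.World) : ℕ∞ :=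
  sInf {c : ℕ∞ | ∃ m : ℕ, c = (m : ℕ∞) ∧ HasPath M x y m}

/-- One literal among the letters r₁,…,r_m, i.e. the atoms 2,…,m+1. -/
def IsLit (m : ℕ) (φ : Formula) : Prop :=
  ∃ j, j < m ∧ (φ = Formula.atom (j+2) ∨ φ = Formula.neg (Formula.atom (j+2)))

/-- A conjunction of literals over the letters r₁,…,r_m. -/
inductive IsConjLits (m : ℕ) : Formula → Prop
  | lit {φ} : IsLit m φ → IsConjLits m φ
  | conj {φ ψ} : IsConjLits m φ → IsConjLits m ψ → IsConjLits m (Formula.and φ ψ)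

/-- The Craig Interpolation Property for 𝕂_n. -/
def HasCIP (n : ℕ) : Prop :=
  ∀ φ ψ : Formula, KProof n (φ.imp ψ) →
    ∃ γ : Formula, γ.letters ⊆ φ.letters ∩ ψ.letters ∧
      KProof n (φ.imp γ) ∧ KProof n (γ.imp ψ)


section FirstOrder

variable {n : ℕ} {M : NModel n}

theorem FO.realize_rename {k k' : ℕ} (f : Fin k → Fin k') (φ : FO n k) (a : Fin k' → M.World) :
    FO.Realize M (φ.rename f) a ↔ FO.Realize M φ (a ∘ f) := by
  induction φ generalizing k' with
  | pred | rel | eq | fal => rfl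
  | not φ ih => exact not_congr (ih f a)
  | and φ ψ ih₁ ih₂ => exact and_congr (ih₁ f a) (ih₂ f a)
  | or φ ψ ih₁ ih₂ => exact or_congr (ih₁ f a) (ih₂ f a)
  | imp φ ψ ih₁ ih₂ => exact imp_congr (ih₁ f a) (ih₂ f a)
  | all φ ih =>
    refine forall_congr' fun x => ?_
    rw [ih]
    congr! 1
    funext j
    induction j using Fin.lastCases <;> simp

theorem FO.realize_alls {k : ℕ} (m : ℕ) (φ : FO n (k + m)) (a : Fin k → M.World) :
    FO.Realize M (FO.alls m φ) a ↔ ∀ b : Fin m → M.World, FO.Realize M φ (Fin.append a b) := by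
  induction m with
  | zero => simp [FO.alls, Fin.append_right_nil]
  | succ m ih =>
    refine (ih φ.all).trans ⟨fun h b => ?_, fun h b x => ?_⟩
    · simpa [← Fin.append_snoc] using h (Fin.init b) (b (Fin.last m))
    · simpa [FO.Realize, Fin.append_snoc] using h (Fin.snoc b x)

theorem FO.realize_disjList {k : ℕ} (a : Fin k → M.World) (L : List (FO n k)) :
    FO.Realize M (FO.disjList L) a ↔ ∃ ψ ∈ L, FO.Realize M ψ a := by
  induction L using FO.disjList.induct with
  | case1 => simp [FO.disjList, FO.Realize]
  | case2 => simp [FO.disjList]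
  | case3 φ ψ rest ih => simp [FO.disjList, FO.Realize, ih]

theorem realize_ST (φ : Formula) (a : Fin 1 → M.World) :
    FO.Realize M (ST n φ) a ↔ Sat M (a 0) φ := by
  induction φ generalizing M with
  | atom => rfl
  | neg φ ih => exact not_congr (ih a)
  | and φ ψ ih₁ ih₂ => exact and_congr (ih₁ a) (ih₂ a)
  | box φ ih =>
    simp only [ST, FO.realize_alls, FO.Realize, FO.realize_disjList, List.mem_map,
      List.mem_finRange, true_and, exists_exists_eq_and, FO.realize_rename, ih, Sat]
    simp [Fin.append_left, Fin.append_right]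

end FirstOrder

section Modal

variable {n : ℕ}

theorem sat_iff_of_isBisim {M N : NModel n} {Z : M.World → N.World → Prop} (hZ : IsBisim M N Z)
    (φ : Formula) {w : M.World} {v : N.World} (hwv : Z w v) : Sat M w φ ↔ Sat N v φ := by
  obtain ⟨-, hV, hforth, hback⟩ := hZ
  induction φ generalizing w v with
  | atom p => exact hV w v hwv p
  | neg φ ih => exact not_congr (ih hwv)
  | and φ ψ ih₁ ih₂ => exact and_congr (ih₁ hwv) (ih₂ hwv)
  | box φ ih =>
    constructor
    · intro h t' ht'
      obtain ⟨t, ht, hmatch⟩ := hback w v t' hwv ht'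
      obtain ⟨i, hi⟩ := h t ht
      obtain ⟨j, hj⟩ := hmatch i
      exact ⟨j, (ih hj).mp hi⟩
    · intro h t ht
      obtain ⟨t', ht', hmatch⟩ := hforth w v t hwv ht
      obtain ⟨j, hj⟩ := h t' ht'
      obtain ⟨i, hi⟩ := hmatch j
      exact ⟨i, (ih hi).mpr hj⟩

theorem realize_iff_of_bisimilar {α : FO n 1} (hα : BisimInvariantFin n α) {M N : NModel n}
    [Finite M.World] [Finite N.World] {w : M.World} {v : N.World} (h : Bisimilar M N w v) :
    FO.Realize M α (fun _ => w) ↔ FO.Realize N α (fun _ => v) :=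
  let ⟨_, hZ, hwv⟩ := h
  hα M N _ w v inferInstance inferInstance hZ hwv

theorem Bisimilar.trans {M₁ M₂ M₃ : NModel n} {w₁ : M₁.World} {w₂ : M₂.World} {w₃ : M₃.World}
    (h₁₂ : Bisimilar M₁ M₂ w₁ w₂) (h₂₃ : Bisimilar M₂ M₃ w₂ w₃) : Bisimilar M₁ M₃ w₁ w₃ := by
  obtain ⟨Z, ⟨-, hV, hforth, hback⟩, hw₁₂⟩ := h₁₂
  obtain ⟨Z', ⟨-, hV', hforth', hback'⟩, hw₂₃⟩ := h₂₃
  refine ⟨fun a c => ∃ b, Z a b ∧ Z' b c, ⟨⟨w₁, w₃, w₂, hw₁₂, hw₂₃⟩, ?_, ?_, ?_⟩, w₂, hw₁₂, hw₂₃⟩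
  · rintro a c ⟨b, hab, hbc⟩ p
    exact (hV a b hab p).trans (hV' b c hbc p)
  · rintro a c t ⟨b, hab, hbc⟩ ht
    obtain ⟨t₂, ht₂, hmatch₂⟩ := hforth a b t hab ht
    obtain ⟨t₃, ht₃, hmatch₃⟩ := hforth' b c t₂ hbc ht₂
    refine ⟨t₃, ht₃, fun k => ?_⟩
    obtain ⟨j, hj⟩ := hmatch₃ k
    obtain ⟨i, hi⟩ := hmatch₂ j
    exact ⟨i, t₂ j, hi, hj⟩
  · rintro a c t₃ ⟨b, hab, hbc⟩ ht₃
    obtain ⟨t₂, ht₂, hmatch₂⟩ := hback' b c t₃ hbc ht₃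
    obtain ⟨t, ht, hmatch⟩ := hback a b t₂ hab ht₂
    refine ⟨t, ht, fun i => ?_⟩
    obtain ⟨j, hj⟩ := hmatch i
    obtain ⟨k, hk⟩ := hmatch₂ j
    exact ⟨k, t₂ j, hj, hk⟩

theorem sat_conjList {M : NModel n} {w : M.World} (L : List Formula) :
    Sat M w (conjList L) ↔ ∀ ψ ∈ L, Sat M w ψ := by
  induction L using conjList.induct with
  | case1 => simp [conjList, Formula.bot, Sat]
  | case2 => simp [conjList]
  | case3 φ ψ rest ih => simp [conjList, Sat, ih]

theorem sat_or {M : NModel n} {w : M.World} {φ ψ : Formula} :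
    Sat M w (φ.or ψ) ↔ Sat M w φ ∨ Sat M w ψ := by
  simp [Formula.or, Sat, or_iff_not_and_not]

theorem sat_disjList {M : NModel n} {w : M.World} (L : List Formula) :
    Sat M w (disjList L) ↔ ∃ ψ ∈ L, Sat M w ψ := by
  induction L using disjList.induct with
  | case1 => simp [disjList, Formula.bot, Sat]
  | case2 => simp [disjList]
  | case3 φ ψ rest ih => simp [disjList, sat_or, ih]

theorem sat_dia {M : NModel n} {w : M.World} {φ : Formula} :
    Sat M w φ.dia ↔ ∃ v : Fin n → M.World, M.R w v ∧ ∀ i, Sat M (v i) φ := by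
  simp [Formula.dia, Sat]

end Modal

section Types

noncomputable def enumSet {X : Type} [Finite X] (A : Set X) : List X :=
  A.toFinite.toFinset.toList

@[simp]
theorem mem_enumSet {X : Type} [Finite X] {A : Set X} {x : X} : x ∈ enumSet A ↔ x ∈ A := by
  simp [enumSet]

open scoped Classical in
noncomputable def signedConj {X : Type} [Finite X] (S : Set X) (φ : X → Formula) : Formula :=
  conjList ((enumSet Set.univ).map fun a => if a ∈ S then φ a else .neg (φ a))

theorem sat_signedConj {n : ℕ} {M : NModel n} {w : M.World} {X : Type} [Finite X] {S : Set X}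
    {φ : X → Formula} : Sat M w (signedConj S φ) ↔ {a | Sat M w (φ a)} = S := by
  classical
  simp only [signedConj, sat_conjList, List.mem_map, mem_enumSet, Set.mem_univ, true_and,
    forall_exists_index, forall_apply_eq_imp_iff, Set.ext_iff, Set.mem_ofPred_eq]
  refine forall_congr' fun a => ?_
  split_ifs with ha <;> simp [Sat, ha]

def MType (K : ℕ) : ℕ → Type
  | 0 => Set (Fin K)
  | l + 1 => Set (Fin K) × Set (Set (MType K l))

instance MType.finite (K : ℕ) : ∀ l, Finite (MType K l)
  | 0 => inferInstanceAs (Finite (Set (Fin K)))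
  | l + 1 => have := MType.finite K l; inferInstanceAs (Finite (_ × _))

variable {n : ℕ}

/-- The depth-`l` wa-bisimulation type of `w` over the letters `< K`. Its second component lists
the sets `A` such that some successor tuple lies entirely in `A`: this is what `◇ ⋁_{t ∈ A} χ_t`
tests, and it encodes both the forth and the back clause. -/
def typeOf (K : ℕ) (M : NModel n) : ∀ l, M.World → MType K l
  | 0, w => {p : Fin K | M.V w p}
  | l + 1, w => ({p : Fin K | M.V w p},
      {A | ∃ v : Fin n → M.World, M.R w v ∧ ∀ i, typeOf K M l (v i) ∈ A})

theorem typeOf_val_iff {K k : ℕ} {M N : NModel n} {x : M.World} {y : N.World}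
    (h : typeOf K M k x = typeOf K N k y) (p : Fin K) : M.V x p ↔ N.V y p := by
  have h₀ : typeOf K M 0 x = typeOf K N 0 y := by
    cases k
    · exact h
    · exact congrArg Prod.fst h
  exact Set.ext_iff.mp h₀ p

noncomputable def charFormula (n K : ℕ) : ∀ l, MType K l → Formula
  | 0, c => signedConj (show Set (Fin K) from c) fun p => .atom p
  | l + 1, c => .and (signedConj c.1 fun p => .atom p)
      (signedConj c.2 fun A => Formula.dia (disjList ((enumSet A).map (charFormula n K l))))

theorem sat_charFormula (K l : ℕ) (M : NModel n) (w : M.World) (c : MType K l) :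
    Sat M w (charFormula n K l c) ↔ typeOf K M l w = c := by
  induction l generalizing w with
  | zero => exact sat_signedConj
  | succ l ih =>
    have hdia (A : Set (MType K l)) :
        Sat M w (Formula.dia (disjList ((enumSet A).map (charFormula n K l)))) ↔
          A ∈ (typeOf K M (l + 1) w).2 := by
      simp only [sat_dia, sat_disjList, List.mem_map, mem_enumSet, exists_exists_and_eq_and, ih,
        exists_eq_right']
      rfl
    simp only [charFormula, Sat, sat_signedConj, hdia, Set.ofPred_mem_eq]
    exact ⟨fun ⟨h₁, h₂⟩ => Prod.ext h₁ h₂, fun h => ⟨congrArg Prod.fst h, congrArg Prod.snd h⟩⟩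

theorem exists_formula_of_typeOf_congr (K l : ℕ) (P : ∀ M : NModel n, M.World → Prop)
    (hP : ∀ (M N : NModel n) [Finite M.World] [Finite N.World] (w : M.World) (v : N.World),
      typeOf K M l w = typeOf K N l v → P N v → P M w) :
    ∃ φ : Formula, ∀ (M : NModel n) (w : M.World), Finite M.World → (P M w ↔ Sat M w φ) := by
  let D : Set (MType K l) :=
    {c | ∃ (N : NModel n) (_ : Finite N.World) (v : N.World), typeOf K N l v = c ∧ P N v}
  refine ⟨disjList ((enumSet D).map (charFormula n K l)), fun M w hM => ?_⟩
  simp only [sat_disjList, List.mem_map, mem_enumSet, exists_exists_and_eq_and, sat_charFormula]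
  constructor
  · exact fun hw => ⟨_, ⟨M, hM, w, rfl, hw⟩, rfl⟩
  · rintro ⟨_, ⟨N, hN, v, rfl, hv⟩, hwv⟩
    exact hP M N w v hwv hv

end Types

section Constructions

variable {n : ℕ}

abbrev NModel.restrict (M : NModel n) (K : ℕ) : NModel n where
  World := M.World
  nonempty := M.nonempty
  R := M.R
  V w p := p < K ∧ M.V w p

abbrev NModel.sum (A B : NModel n) : NModel n where
  World := A.World ⊕ B.World
  nonempty := ⟨Sum.inl A.nonempty.some⟩
  R
    | .inl a, t => ∃ a', t = (Sum.inl ∘ a') ∧ A.R a a'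
    | .inr b, t => ∃ b', t = (Sum.inr ∘ b') ∧ B.R b b'
  V
    | .inl a, p => A.V a p
    | .inr b, p => B.V b p

/-- `c + 1` disjoint copies of `A`. -/
abbrev NModel.copies (A : NModel n) (c : ℕ) : NModel n where
  World := A.World × Fin (c + 1)
  nonempty := ⟨(A.nonempty.some, 0)⟩
  R z t := ∃ a, t = (fun k => (a k, z.2)) ∧ A.R z.1 a
  V z p := A.V z.1 p

theorem bisimilar_sum_inl (A B : NModel n) (a : A.World) :
    Bisimilar A (A.sum B) a (.inl a) := by
  refine ⟨fun a z => z = .inl a, ⟨⟨a, _, rfl⟩, ?_, ?_, ?_⟩, rfl⟩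
  · rintro a _ rfl p; rfl
  · rintro a _ t rfl ht
    exact ⟨Sum.inl ∘ t, ⟨t, rfl, ht⟩, fun j => ⟨j, rfl⟩⟩
  · rintro a _ _ rfl ⟨t, rfl, ht⟩
    exact ⟨t, ht, fun i => ⟨i, rfl⟩⟩

theorem bisimilar_sum_inr (A B : NModel n) (b : B.World) :
    Bisimilar B (A.sum B) b (.inr b) := by
  refine ⟨fun b z => z = .inr b, ⟨⟨b, _, rfl⟩, ?_, ?_, ?_⟩, rfl⟩
  · rintro b _ rfl p; rfl
  · rintro b _ t rfl ht
    exact ⟨Sum.inr ∘ t, ⟨t, rfl, ht⟩, fun j => ⟨j, rfl⟩⟩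
  · rintro b _ _ rfl ⟨t, rfl, ht⟩
    exact ⟨t, ht, fun i => ⟨i, rfl⟩⟩

theorem bisimilar_copies (A : NModel n) (c : ℕ) (a : A.World) (i : Fin (c + 1)) :
    Bisimilar A (A.copies c) a (a, i) := by
  refine ⟨fun a z => z.1 = a, ⟨⟨a, (a, i), rfl⟩, ?_, ?_, ?_⟩, rfl⟩
  · rintro a ⟨_, _⟩ rfl p; rfl
  · rintro a ⟨_, j⟩ t rfl ht
    exact ⟨fun k => (t k, j), ⟨t, rfl, ht⟩, fun k => ⟨k, rfl⟩⟩
  · rintro a _ _ rfl ⟨t, rfl, ht⟩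
    exact ⟨t, ht, fun k => ⟨k, rfl⟩⟩

def FO.letterBound : ∀ {k}, FO n k → ℕ
  | _, .pred p _ => p + 1
  | _, .rel _ | _, .eq _ _ | _, .fal => 0
  | _, .not φ | _, .all φ => φ.letterBound
  | _, .and φ ψ | _, .or φ ψ | _, .imp φ ψ => max φ.letterBound ψ.letterBound

theorem FO.realize_restrict {M : NModel n} {K k : ℕ} (φ : FO n k) (hK : φ.letterBound ≤ K)
    (a : Fin k → M.World) : FO.Realize (M.restrict K) φ a ↔ FO.Realize M φ a := by
  induction φ with
  | pred p x => exact and_iff_right hK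
  | rel | eq | fal => rfl
  | not φ ih => exact not_congr (ih hK a)
  | and φ ψ ih₁ ih₂ =>
    exact and_congr (ih₁ (le_of_max_le_left hK) a) (ih₂ (le_of_max_le_right hK) a)
  | or φ ψ ih₁ ih₂ =>
    exact or_congr (ih₁ (le_of_max_le_left hK) a) (ih₂ (le_of_max_le_right hK) a)
  | imp φ ψ ih₁ ih₂ =>
    exact imp_congr (ih₁ (le_of_max_le_left hK) a) (ih₂ (le_of_max_le_right hK) a)
  | all φ ih => exact forall_congr' fun x => ih hK _

theorem typeOf_restrict (K l : ℕ) (M : NModel n) (w : M.World) :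
    typeOf K (M.restrict K) l w = typeOf K M l w := by
  induction l generalizing w with
  | zero => exact Set.ext fun p => and_iff_right p.isLt
  | succ l ih => exact Prod.ext (Set.ext fun p => and_iff_right p.isLt) (by simp only [typeOf, ih])

end Constructions

section Paths

variable {n : ℕ} {M : NModel n} {x y z : M.World}

theorem hasPath_zero : HasPath M x y 0 ↔ x = y :=
  ⟨fun ⟨_, h₀, h₁, _⟩ => h₀ ▸ h₁, fun h => ⟨fun _ => x, rfl, h, by simp⟩⟩

theorem hasPath_succ {m : ℕ} : HasPath M x z (m + 1) ↔ ∃ y, Edge M x y ∧ HasPath M y z m := by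
  constructor
  · rintro ⟨f, rfl, rfl, hf⟩
    exact ⟨f 1, hf 0 m.succ_pos, fun i => f (i + 1), rfl, rfl, fun i hi => hf (i + 1) (by omega)⟩
  · rintro ⟨y, hxy, g, rfl, rfl, hg⟩
    refine ⟨fun i => if i = 0 then x else g (i - 1), rfl, rfl, fun i hi => ?_⟩
    rcases i with _ | i
    · simpa using hxy
    · simpa using hg i (by omega)

theorem HasPath.trans {a b : ℕ} (h₁ : HasPath M x y a) (h₂ : HasPath M y z b) :
    HasPath M x z (a + b) := by
  induction a generalizing x with
  | zero => rwa [hasPath_zero.mp h₁, zero_add]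
  | succ a ih =>
    obtain ⟨x', hxx', h₁⟩ := hasPath_succ.mp h₁
    rw [add_right_comm]
    exact hasPath_succ.mpr ⟨x', hxx', ih h₁⟩

theorem hasPath_one_of_edge (h : Edge M x y) : HasPath M x y 1 :=
  hasPath_succ.mpr ⟨y, h, hasPath_zero.mpr rfl⟩

theorem HasPath.symm {m : ℕ} (h : HasPath M x y m) : HasPath M y x m := by
  induction m generalizing x with
  | zero => exact hasPath_zero.mpr (hasPath_zero.mp h).symm
  | succ m ih =>
    obtain ⟨x', hxx', h⟩ := hasPath_succ.mp h
    exact (ih h).trans (hasPath_one_of_edge hxx'.symm)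

theorem dist_le_iff {d : ℕ} : dist M x y ≤ d ↔ ∃ m ≤ d, HasPath M x y m := by
  constructor
  · intro h
    have hne : {c : ℕ∞ | ∃ m : ℕ, c = m ∧ HasPath M x y m}.Nonempty := by
      by_contra hempty
      simp [dist, Set.not_nonempty_iff_eq_empty.mp hempty] at h
    obtain ⟨m, hm, hpath⟩ := csInf_mem hne
    exact ⟨m, by rw [dist, hm] at h; exact_mod_cast h, hpath⟩
  · rintro ⟨m, hm, hpath⟩
    calc dist M x y ≤ m := sInf_le ⟨m, rfl, hpath⟩
      _ ≤ d := by exact_mod_cast hm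

theorem dist_le_of_eq (h : x = y) (d : ℕ) : dist M x y ≤ d :=
  dist_le_iff.mpr ⟨0, d.zero_le, hasPath_zero.mpr h⟩

theorem dist_comm : dist M x y = dist M y x := by
  unfold dist
  congr 1
  ext c
  exact exists_congr fun m => and_congr_right fun _ => ⟨HasPath.symm, HasPath.symm⟩

theorem dist_le_one_of_edge (h : Edge M x y) : dist M x y ≤ (1 : ℕ) :=
  dist_le_iff.mpr ⟨1, le_rfl, hasPath_one_of_edge h⟩

theorem dist_le_of_le {d d' : ℕ} (h : dist M x y ≤ d) (hd : d ≤ d') : dist M x y ≤ d' :=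
  h.trans (by exact_mod_cast hd)

theorem dist_triangle_le {a b : ℕ} (h₁ : dist M x y ≤ a) (h₂ : dist M y z ≤ b) :
    dist M x z ≤ (a + b : ℕ) := by
  obtain ⟨m₁, hm₁, hp₁⟩ := dist_le_iff.mp h₁
  obtain ⟨m₂, hm₂, hp₂⟩ := dist_le_iff.mp h₂
  exact dist_le_iff.mpr ⟨m₁ + m₂, by omega, hp₁.trans hp₂⟩

theorem dist_le_two_pow_of_edge (h : Edge M x y) (r : ℕ) : dist M x y ≤ (2 ^ r : ℕ) :=
  dist_le_of_le (dist_le_one_of_edge h) Nat.one_le_two_pow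

theorem dist_le_two_pow_succ {r : ℕ} (h : dist M x y ≤ (2 ^ r : ℕ)) :
    dist M x y ≤ (2 ^ (r + 1) : ℕ) :=
  dist_le_of_le h (Nat.pow_le_pow_right two_pos r.le_succ)

theorem dist_triangle_two_pow {r : ℕ} (h₁ : dist M x y ≤ (2 ^ r : ℕ))
    (h₂ : dist M y z ≤ (2 ^ r : ℕ)) : dist M x z ≤ (2 ^ (r + 1) : ℕ) := by
  simpa [pow_succ, mul_two] using dist_triangle_le h₁ h₂

section Maps

variable {A B : NModel n} {f : A.World → B.World}

theorem HasPath.map (hf : ∀ {a a'}, Edge A a a' → Edge B (f a) (f a')) {a a' : A.World} {m : ℕ}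
    (h : HasPath A a a' m) : HasPath B (f a) (f a') m := by
  obtain ⟨g, rfl, rfl, hg⟩ := h
  exact ⟨f ∘ g, rfl, rfl, fun i hi => hf (hg i hi)⟩

theorem dist_map_le (hf : ∀ {a a'}, Edge A a a' → Edge B (f a) (f a')) {a a' : A.World} {d : ℕ}
    (h : dist A a a' ≤ d) : dist B (f a) (f a') ≤ d :=
  let ⟨m, hm, hpath⟩ := dist_le_iff.mp h
  dist_le_iff.mpr ⟨m, hm, hpath.map hf⟩

theorem depth_le_of_dist_le (depth : A.World → ℕ)
    (hdepth : ∀ {a a'}, Edge A a a' → depth a' ≤ depth a + 1) {a a' : A.World} {d : ℕ}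
    (h : dist A a a' ≤ d) : depth a' ≤ depth a + d := by
  obtain ⟨m, hm, hpath⟩ := dist_le_iff.mp h
  suffices ∀ {b}, HasPath A b a' m → depth a' ≤ depth b + m from (this hpath).trans (by omega)
  clear hm hpath
  induction m with
  | zero => exact fun h => (hasPath_zero.mp h ▸ le_refl _)
  | succ m ih =>
    intro b h
    obtain ⟨b₁, hb₁, h⟩ := hasPath_succ.mp h
    have := hdepth hb₁
    have := ih h
    omega

/-- Paths starting at `f a` stay in the image of `f` as long as they cannot reach a point of
depth `> D`, the only points where `f` may fail to reflect edges. -/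
theorem exists_dist_le_of_dist_map_le (depth : A.World → ℕ) {D : ℕ}
    (hlift : ∀ {a u}, depth a ≤ D → Edge B (f a) u → ∃ a', u = f a' ∧ Edge A a a')
    (hdepth : ∀ {a a'}, Edge A a a' → depth a' ≤ depth a + 1) {a : A.World} {u : B.World}
    {d : ℕ} (h : dist B (f a) u ≤ d) (hd : depth a + d ≤ D + 1) :
    ∃ a', u = f a' ∧ dist A a a' ≤ d := by
  obtain ⟨m, hm, hpath⟩ := dist_le_iff.mp h
  suffices ∀ {b}, HasPath B (f b) u m → depth b + m ≤ D + 1 → ∃ b', u = f b' ∧ HasPath A b b' m by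
    obtain ⟨a', rfl, h'⟩ := this hpath (by omega)
    exact ⟨a', rfl, dist_le_iff.mpr ⟨m, hm, h'⟩⟩
  clear hm hpath hd h
  induction m with
  | zero => exact fun {b} h _ => ⟨b, (hasPath_zero.mp h).symm, hasPath_zero.mpr rfl⟩
  | succ m ih =>
    intro b h hdepth_b
    obtain ⟨u₁, hu₁, h⟩ := hasPath_succ.mp h
    obtain ⟨b₁, rfl, hb₁⟩ := hlift (by omega) hu₁
    have := hdepth hb₁
    obtain ⟨b', rfl, h'⟩ := ih h (by omega)
    exact ⟨b', rfl, hasPath_succ.mpr ⟨b₁, hb₁, h'⟩⟩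

end Maps

end Paths

section BackAndForth

variable {n : ℕ} {A B : NModel n}

structure IsPartialIso (P : List (A.World × B.World)) : Prop where
  val_iff : ∀ p ∈ P, ∀ l, A.V p.1 l ↔ B.V p.2 l
  eq_iff : ∀ p ∈ P, ∀ p' ∈ P, p.1 = p'.1 ↔ p.2 = p'.2
  rel_iff : ∀ p ∈ P, ∀ ps : Fin n → A.World × B.World, (∀ i, ps i ∈ P) →
    (A.R p.1 (fun i => (ps i).1) ↔ B.R p.2 (fun i => (ps i).2))

/-- `I r P`: position `P` is winning for Duplicator with `r` rounds left. -/
structure IsBackForth (I : ℕ → List (A.World × B.World) → Prop) : Prop where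
  isPartialIso : ∀ {r P}, I r P → IsPartialIso P
  forth : ∀ {r P}, I (r + 1) P → ∀ x, ∃ y, I r ((x, y) :: P)
  back : ∀ {r P}, I (r + 1) P → ∀ y, ∃ x, I r ((x, y) :: P)

theorem snoc_mem_cons {X Y : Type*} {k : ℕ} {P : List (X × Y)} {a : Fin k → X} {b : Fin k → Y}
    (hab : ∀ i, (a i, b i) ∈ P) (x : X) (y : Y) (i : Fin (k + 1)) :
    (Fin.snoc (α := fun _ => X) a x i, Fin.snoc (α := fun _ => Y) b y i) ∈ (x, y) :: P := by
  induction i using Fin.lastCases with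
  | last => simp
  | cast i => simp [hab i]

theorem IsBackForth.realize_iff {I : ℕ → List (A.World × B.World) → Prop} (hI : IsBackForth I)
    {k : ℕ} (φ : FO n k) {r : ℕ} (hr : φ.qr ≤ r) {P : List (A.World × B.World)} (hP : I r P)
    {a : Fin k → A.World} {b : Fin k → B.World} (hab : ∀ i, (a i, b i) ∈ P) :
    FO.Realize A φ a ↔ FO.Realize B φ b := by
  induction φ generalizing r P with
  | pred p x => exact (hI.isPartialIso hP).val_iff _ (hab x) p
  | rel ts => exact (hI.isPartialIso hP).rel_iff _ (hab (ts 0)) _ fun i => hab (ts i.succ)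
  | eq x y => exact (hI.isPartialIso hP).eq_iff _ (hab x) _ (hab y)
  | fal => rfl
  | not φ ih => exact not_congr (ih hr hP hab)
  | and φ ψ ih₁ ih₂ =>
    exact and_congr (ih₁ (le_of_max_le_left hr) hP hab) (ih₂ (le_of_max_le_right hr) hP hab)
  | or φ ψ ih₁ ih₂ =>
    exact or_congr (ih₁ (le_of_max_le_left hr) hP hab) (ih₂ (le_of_max_le_right hr) hP hab)
  | imp φ ψ ih₁ ih₂ =>
    exact imp_congr (ih₁ (le_of_max_le_left hr) hP hab) (ih₂ (le_of_max_le_right hr) hP hab)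
  | all φ ih =>
    obtain ⟨r, rfl⟩ := Nat.exists_eq_add_one.mpr (lt_of_lt_of_le φ.qr.succ_pos hr)
    replace hr : φ.qr ≤ r := Nat.le_of_succ_le_succ hr
    constructor
    · intro h y
      obtain ⟨x, hxy⟩ := hI.back hP y
      exact (ih hr hxy (snoc_mem_cons hab x y)).mp (h x)
    · intro h x
      obtain ⟨y, hxy⟩ := hI.forth hP x
      exact (ih hr hxy (snoc_mem_cons hab x y)).mpr (h y)

end BackAndForth

section Locality

variable {n : ℕ} {C : NModel n}

/-- `T r x y`: the `2 ^ r`-neighbourhoods of `x` and `y` in `C` correspond. -/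
structure LocalIso (C : NModel n) (T : ℕ → C.World → C.World → Prop) : Prop where
  val_iff : ∀ {r x y}, T r x y → ∀ l, C.V x l ↔ C.V y l
  eq_iff : ∀ {r x y x' y'}, T r x y → T r x' y' → (x = x' ↔ y = y')
  rel_iff : ∀ {r x y} {xs ys : Fin n → C.World}, T r x y → (∀ i, T r (xs i) (ys i)) →
    (C.R x xs ↔ C.R y ys)
  mono : ∀ {r x y}, T (r + 1) x y → T r x y
  forth : ∀ {r x y x'}, T (r + 1) x y → dist C x x' ≤ (2 ^ r : ℕ) →
    ∃ y', T r x' y' ∧ dist C y y' ≤ (2 ^ r : ℕ)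
  back : ∀ {r x y y'}, T (r + 1) x y → dist C y y' ≤ (2 ^ r : ℕ) →
    ∃ x', T r x' y' ∧ dist C x x' ≤ (2 ^ r : ℕ)

variable {T : ℕ → C.World → C.World → Prop}

theorem LocalIso.swap (hT : LocalIso C T) : LocalIso C fun r => Function.swap (T r) where
  val_iff h l := (hT.val_iff h l).symm
  eq_iff h h' := (hT.eq_iff h h').symm
  rel_iff h hs := (hT.rel_iff h hs).symm
  mono := hT.mono
  forth := hT.back
  back := hT.forth

variable (C) in
inductive Move (c : ℕ)
  | twin (x y : C.World)
  | copy (z : C.World) (i j : Fin (c + 1))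

namespace Move

variable {c : ℕ}

def pair : Move C c → (C.copies c).World × (C.copies c).World
  | twin x y => ((x, 0), (y, 0))
  | copy z i j => ((z, i), (z, j))

def swap : Move C c → Move C c
  | twin x y => twin y x
  | copy z i j => copy z j i

@[simp]
theorem swap_swap (m : Move C c) : m.swap.swap = m := by cases m <;> rfl

@[simp]
theorem pair_swap (m : Move C c) : m.swap.pair = m.pair.swap := by cases m <;> rfl

theorem mem_map_swap {m : Move C c} {L : List (Move C c)} : m ∈ L.map swap ↔ m.swap ∈ L := by
  rw [List.mem_map]
  exact ⟨fun ⟨m', hm', h⟩ => h ▸ (swap_swap m').symm ▸ hm', fun h => ⟨_, h, swap_swap m⟩⟩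

end Move

open Move

/-- Duplicator's invariant with `r` rounds left. She answers a move within `2 ^ r` of a twin
pair through `T`, a move within `2 ^ r` of an earlier copy move by the same point in the matching
copy, and any other move by the same point in a fresh copy, which exists by `length_le`. -/
structure GameInv (T : ℕ → C.World → C.World → Prop) {c : ℕ} (r : ℕ) (L : List (Move C c)) :
    Prop where
  length_le : L.length + r ≤ c
  corr : ∀ {x y}, twin x y ∈ L → T r x y
  copy_copy : ∀ {z i j z' i' j'}, copy z i j ∈ L → copy z' i' j' ∈ L →
    dist C z z' ≤ (2 ^ r : ℕ) → (i = i' ↔ j = j')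
  copy_twin_left : ∀ {z i j x y}, copy z i j ∈ L → twin x y ∈ L →
    dist C z x ≤ (2 ^ r : ℕ) → i ≠ 0
  copy_twin_right : ∀ {z i j x y}, copy z i j ∈ L → twin x y ∈ L →
    dist C z y ≤ (2 ^ r : ℕ) → j ≠ 0

namespace GameInv

variable {c r : ℕ} {L : List (Move C c)}

theorem map_swap (h : GameInv T r L) : GameInv (fun r => Function.swap (T r)) r (L.map swap) where
  length_le := by simpa using h.length_le
  corr hm := h.corr (mem_map_swap.mp hm)
  copy_copy hm hm' hd := (h.copy_copy (mem_map_swap.mp hm) (mem_map_swap.mp hm') hd).symm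
  copy_twin_left hm hm' hd := h.copy_twin_right (mem_map_swap.mp hm) (mem_map_swap.mp hm') hd
  copy_twin_right hm hm' hd := h.copy_twin_left (mem_map_swap.mp hm) (mem_map_swap.mp hm') hd

theorem rel_pair_snd (hT : LocalIso C T) (h : GameInv T r L) {m : Move C c} (hm : m ∈ L)
    {ms : Fin n → Move C c} (hms : ∀ k, ms k ∈ L)
    (hR : (C.copies c).R m.pair.1 fun k => (ms k).pair.1) :
    (C.copies c).R m.pair.2 fun k => (ms k).pair.2 := by
  obtain ⟨zs, hzs, hR⟩ := hR
  have hpair (k : Fin n) : (ms k).pair.1 = (zs k, m.pair.1.2) := congrFun hzs k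
  have hedge (k : Fin n) : dist C m.pair.1.1 (zs k) ≤ (2 ^ r : ℕ) :=
    dist_le_two_pow_of_edge (Or.inl ⟨zs, hR, k, rfl⟩) r
  cases m with
  | twin x y =>
    have htwin (k : Fin n) : ∃ y', ms k = twin (zs k) y' := by
      have hk := hpair k
      generalize hmk : ms k = mk at hk
      cases mk with
      | twin x' y' => exact ⟨y', by simp_all [pair]⟩
      | copy z' i' j' =>
        simp only [pair, Prod.mk.injEq] at hk
        obtain ⟨rfl, rfl⟩ := hk
        exact absurd rfl (h.copy_twin_left (hmk ▸ hms k) hm (dist_comm ▸ hedge k))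
    choose ys hys using htwin
    refine ⟨ys, by simp [hys, pair], (hT.rel_iff (h.corr hm) fun k => ?_).mp hR⟩
    exact h.corr (hys k ▸ hms k)
  | copy z i j =>
    have hcopy (k : Fin n) : ∃ i', ms k = copy (zs k) i i' ∧ i' = j := by
      have hk := hpair k
      generalize hmk : ms k = mk at hk
      cases mk with
      | twin x' y' =>
        simp only [pair, Prod.mk.injEq] at hk
        obtain ⟨rfl, rfl⟩ := hk
        exact absurd rfl (h.copy_twin_left hm (hmk ▸ hms k) (hedge k))
      | copy z' i' j' =>
        simp only [pair, Prod.mk.injEq] at hk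
        obtain ⟨rfl, rfl⟩ := hk
        exact ⟨j', rfl, ((h.copy_copy hm (hmk ▸ hms k) (hedge k)).mp rfl).symm⟩
    choose js hjs hjs' using hcopy
    exact ⟨zs, by funext k; simp [hjs, hjs', pair], hR⟩

theorem isPartialIso (hT : LocalIso C T) (h : GameInv T r L) :
    IsPartialIso (L.map Move.pair) where
  val_iff := by
    rintro _ hp l
    obtain ⟨m, hm, rfl⟩ := List.mem_map.mp hp
    cases m with
    | twin x y => exact hT.val_iff (h.corr hm) l
    | copy z i j => rfl
  eq_iff := by
    rintro _ hp _ hp'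
    obtain ⟨m, hm, rfl⟩ := List.mem_map.mp hp
    obtain ⟨m', hm', rfl⟩ := List.mem_map.mp hp'
    cases m <;> cases m' <;> simp only [pair, Prod.mk.injEq, and_true]
    · exact hT.eq_iff (h.corr hm) (h.corr hm')
    · exact iff_of_false (fun ⟨hx, hi⟩ => h.copy_twin_left hm' hm (dist_le_of_eq hx.symm _) hi.symm)
        (fun ⟨hy, hj⟩ => h.copy_twin_right hm' hm (dist_le_of_eq hy.symm _) hj.symm)
    · exact iff_of_false (fun ⟨hx, hi⟩ => h.copy_twin_left hm hm' (dist_le_of_eq hx _) hi)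
        (fun ⟨hy, hj⟩ => h.copy_twin_right hm hm' (dist_le_of_eq hy _) hj)
    · exact and_congr_right fun hz => h.copy_copy hm hm' (dist_le_of_eq hz _)
  rel_iff := by
    rintro _ hp ps hps
    obtain ⟨m, hm, rfl⟩ := List.mem_map.mp hp
    choose ms hms hpair using fun k => List.mem_map.mp (hps k)
    simp only [← hpair]
    refine ⟨h.rel_pair_snd hT hm hms, fun hR => ?_⟩
    simpa using h.map_swap.rel_pair_snd hT.swap (m := m.swap) (mem_map_swap.mpr (by simpa using hm))
      (ms := fun k => (ms k).swap) (fun k => mem_map_swap.mpr (by simpa using hms k))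
      (by simpa using hR)

theorem cons_twin (hT : LocalIso C T) (h : GameInv T (r + 1) L) {x y : C.World} (hxy : T r x y)
    (hleft : ∀ {z i j}, copy z i j ∈ L → dist C z x ≤ (2 ^ r : ℕ) → i ≠ 0)
    (hright : ∀ {z i j}, copy z i j ∈ L → dist C z y ≤ (2 ^ r : ℕ) → j ≠ 0) :
    GameInv T r (twin x y :: L) where
  length_le := by have := h.length_le; simp only [List.length_cons]; omega
  corr hm := by
    rcases List.mem_cons.mp hm with he | hm
    · cases he; exact hxy
    · exact hT.mono (h.corr hm)
  copy_copy hm hm' hd := by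
    simp only [List.mem_cons, reduceCtorEq, false_or] at hm hm'
    exact h.copy_copy hm hm' (dist_le_two_pow_succ hd)
  copy_twin_left hm hm' hd := by
    simp only [List.mem_cons, reduceCtorEq, false_or] at hm
    rcases List.mem_cons.mp hm' with he | hm'
    · cases he; exact hleft hm hd
    · exact h.copy_twin_left hm hm' (dist_le_two_pow_succ hd)
  copy_twin_right hm hm' hd := by
    simp only [List.mem_cons, reduceCtorEq, false_or] at hm
    rcases List.mem_cons.mp hm' with he | hm'
    · cases he; exact hright hm hd
    · exact h.copy_twin_right hm hm' (dist_le_two_pow_succ hd)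

theorem cons_copy (hT : LocalIso C T) (h : GameInv T (r + 1) L) {z : C.World} {i j : Fin (c + 1)}
    (hcopy : ∀ {z' i' j'}, copy z' i' j' ∈ L → dist C z z' ≤ (2 ^ r : ℕ) → (i = i' ↔ j = j'))
    (hleft : ∀ {x y}, twin x y ∈ L → dist C z x ≤ (2 ^ r : ℕ) → i ≠ 0)
    (hright : ∀ {x y}, twin x y ∈ L → dist C z y ≤ (2 ^ r : ℕ) → j ≠ 0) :
    GameInv T r (copy z i j :: L) where
  length_le := by have := h.length_le; simp only [List.length_cons]; omega
  corr hm := by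
    simp only [List.mem_cons, reduceCtorEq, false_or] at hm
    exact hT.mono (h.corr hm)
  copy_copy hm hm' hd := by
    rcases List.mem_cons.mp hm with he | hm <;> rcases List.mem_cons.mp hm' with he' | hm'
    · cases he; cases he'; exact iff_of_true rfl rfl
    · cases he; exact hcopy hm' hd
    · cases he'; exact (eq_comm.trans (hcopy hm (dist_comm ▸ hd))).trans eq_comm
    · exact h.copy_copy hm hm' (dist_le_two_pow_succ hd)
  copy_twin_left hm hm' hd := by
    simp only [List.mem_cons, reduceCtorEq, false_or] at hm'
    rcases List.mem_cons.mp hm with he | hm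
    · cases he; exact hleft hm' hd
    · exact h.copy_twin_left hm hm' (dist_le_two_pow_succ hd)
  copy_twin_right hm hm' hd := by
    simp only [List.mem_cons, reduceCtorEq, false_or] at hm'
    rcases List.mem_cons.mp hm with he | hm
    · cases he; exact hright hm' hd
    · exact h.copy_twin_right hm hm' (dist_le_two_pow_succ hd)

theorem exists_fresh_copy (h : GameInv T (r + 1) L) :
    ∃ j : Fin (c + 1), j ≠ 0 ∧ ∀ {z i j'}, copy z i j' ∈ L → j ≠ j' := by
  classical
  have hcard : (0 :: L.map fun m => m.pair.2.2).toFinset.card <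
      (Finset.univ : Finset (Fin (c + 1))).card := by
    have := (0 :: L.map fun m => m.pair.2.2).toFinset_card_le
    have := h.length_le
    simp only [List.length_cons, List.length_map, Finset.card_univ, Fintype.card_fin] at *
    omega
  obtain ⟨j, -, hj⟩ := Finset.exists_mem_notMem_of_card_lt_card hcard
  simp only [List.toFinset_cons, Finset.mem_insert, List.mem_toFinset, List.mem_map, not_or,
    not_exists, not_and] at hj
  exact ⟨j, hj.1, fun hm he => hj.2 _ hm (by simp [pair, he])⟩

theorem forth (hT : LocalIso C T) (h : GameInv T (r + 1) L) (x : (C.copies c).World) :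
    ∃ m : Move C c, m.pair.1 = x ∧ GameInv T r (m :: L) := by
  obtain ⟨z, i⟩ := x
  by_cases hnear_twin : i = 0 ∧ ∃ x y, twin x y ∈ L ∧ dist C z x ≤ (2 ^ r : ℕ)
  · obtain ⟨rfl, x, y, hm, hd⟩ := hnear_twin
    obtain ⟨y', hzy', hyy'⟩ := hT.forth (h.corr hm) (dist_comm ▸ hd)
    exact ⟨twin z y', rfl, h.cons_twin hT hzy'
      (fun hm' hd' => h.copy_twin_left hm' hm (dist_triangle_two_pow hd' hd))
      (fun hm' hd' => h.copy_twin_right hm' hm (dist_triangle_two_pow hd' (dist_comm ▸ hyy')))⟩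
  by_cases hnear_copy : ∃ z₁ j₁, copy z₁ i j₁ ∈ L ∧ dist C z z₁ ≤ (2 ^ r : ℕ)
  · obtain ⟨z₁, j₁, hm₁, hd₁⟩ := hnear_copy
    exact ⟨copy z i j₁, rfl, h.cons_copy hT
      (fun hm hd => h.copy_copy hm₁ hm (dist_triangle_two_pow (dist_comm ▸ hd₁) hd))
      (fun hm hd hi => hnear_twin ⟨hi, _, _, hm, hd⟩)
      (fun hm hd => h.copy_twin_right hm₁ hm (dist_triangle_two_pow (dist_comm ▸ hd₁) hd))⟩
  obtain ⟨j, hj0, hj⟩ := h.exists_fresh_copy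
  exact ⟨copy z i j, rfl, h.cons_copy hT
    (fun hm hd => iff_of_false (fun hi => hnear_copy ⟨_, _, hi ▸ hm, hd⟩) (hj hm))
    (fun hm hd hi => hnear_twin ⟨hi, _, _, hm, hd⟩) (fun _ _ => hj0)⟩

end GameInv

theorem LocalIso.realize_copies_iff (hT : LocalIso C T) {q : ℕ} {a b : C.World} (hab : T q a b)
    (φ : FO n 1) (hφ : φ.qr ≤ q) :
    FO.Realize (C.copies (q + 1)) φ (fun _ => (a, 0)) ↔
      FO.Realize (C.copies (q + 1)) φ (fun _ => (b, 0)) := by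
  let I (r : ℕ) (P : List ((C.copies (q + 1)).World × (C.copies (q + 1)).World)) : Prop :=
    ∃ L : List (Move C (q + 1)), GameInv T r L ∧ L.map pair = P
  have hI : IsBackForth I := by
    refine ⟨?_, ?_, ?_⟩
    · rintro r _ ⟨L, hL, rfl⟩
      exact hL.isPartialIso hT
    · rintro r _ ⟨L, hL, rfl⟩ x
      obtain ⟨m, rfl, hm⟩ := hL.forth hT x
      exact ⟨m.pair.2, m :: L, hm, rfl⟩
    · rintro r _ ⟨L, hL, rfl⟩ y
      -- answer in the game with the two sides exchanged
      obtain ⟨m, rfl, hm⟩ := hL.map_swap.forth hT.swap y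
      exact ⟨m.pair.2, m.swap :: L, by simpa [Function.comp_def] using hm.map_swap,
        by simp [Prod.swap]⟩
  have hinit : GameInv T q [(twin a b : Move C (q + 1))] :=
    ⟨by simp [Nat.add_comm], fun hm => by cases List.mem_singleton.mp hm; exact hab,
      fun hm => by simp at hm, fun hm => by simp at hm, fun hm => by simp at hm⟩
  exact hI.realize_iff φ hφ ⟨_, hinit, rfl⟩ fun _ => List.mem_singleton_self _

end Locality

section Unraveling

variable {n : ℕ} {M : NModel n} {w : M.World}

theorem rmap_append (s : List ((Fin n → M.World) × Fin n)) (a : (Fin n → M.World) × Fin n) :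
    rmap M w (s ++ [a]) = a.1 a.2 := by
  simp [rmap]

variable [NeZero n] {l : ℕ}

theorem GoodSeq.append {s : List ((Fin n → M.World) × Fin n)} (hs : GoodSeq M w s)
    {a : (Fin n → M.World) × Fin n} (ha : M.R (rmap M w s) a.1) : GoodSeq M w (s ++ [a]) := by
  obtain ⟨⟨rest, hrest⟩, hchain⟩ := hs
  refine ⟨⟨rest ++ [a], by simp [hrest]⟩, hchain.append (List.isChain_singleton a) ?_⟩
  intro x hx y hy
  cases hy
  have : rmap M w s = x.1 x.2 := by simp [rmap, Option.mem_def.mp hx]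
  exact this ▸ ha

instance (M : NModel n) [Finite M.World] (w : M.World) (l : ℕ) :
    Finite (UnravelB M w l).World :=
  have := (List.finite_length_le ((Fin n → M.World) × Fin n) (l + 1)).to_subtype
  Finite.of_injective (fun s => (⟨s.val, s.prop.2⟩ : {s : List _ | s.length ≤ l + 1}))
    fun _ _ h => Subtype.ext (by simpa using h)

theorem unravelB_length_of_rel {s : (UnravelB M w l).World} {t : Fin n → (UnravelB M w l).World}
    (h : (UnravelB M w l).R s t) (i : Fin n) : (t i).val.length = s.val.length + 1 := by
  obtain ⟨a, ha⟩ := h.2 i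
  simp [ha]

theorem unravelB_length_le_of_rel {s : (UnravelB M w l).World}
    {t : Fin n → (UnravelB M w l).World} (h : (UnravelB M w l).R s t) : s.val.length ≤ l := by
  have := (t 0).prop.2
  rw [unravelB_length_of_rel h] at this
  omega

theorem unravelB_exists_rel (s : (UnravelB M w l).World) (hs : s.val.length ≤ l)
    {u : Fin n → M.World} (hu : M.R (rmap M w s.val) u) :
    ∃ t : Fin n → (UnravelB M w l).World, (UnravelB M w l).R s t ∧
      ∀ i, rmap M w (t i).val = u i := by
  refine ⟨fun i => ⟨s.val ++ [(u, i)], s.prop.1.append hu, by simp; omega⟩, ?_, fun i => ?_⟩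
  · exact ⟨by simpa [rmap_append] using hu, fun i => ⟨_, rfl⟩⟩
  · exact rmap_append _ _

theorem unravelB_length_le_of_edge {s s' : (UnravelB M w l).World}
    (h : Edge (UnravelB M w l) s s') : s'.val.length ≤ s.val.length + 1 := by
  rcases h with ⟨t, ht, i, rfl⟩ | ⟨t, ht, i, rfl⟩
  · exact (unravelB_length_of_rel ht i).le
  · have := unravelB_length_of_rel ht i
    omega

variable (M w l) in
/-- The unraveling of depth `l` with a copy of `M` attached below each leaf. -/
abbrev NModel.graft : NModel n where
  World := (UnravelB M w l).World ⊕ M.World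
  nonempty := ⟨.inr w⟩
  R
    | .inl s, t => (∃ s', t = (Sum.inl ∘ s') ∧ (UnravelB M w l).R s s') ∨
        (s.val.length = l + 1 ∧ ∃ u, t = (Sum.inr ∘ u) ∧ M.R (rmap M w s.val) u)
    | .inr x, t => ∃ u, t = (Sum.inr ∘ u) ∧ M.R x u
  V
    | .inl s, p => M.V (rmap M w s.val) p
    | .inr x, p => M.V x p

theorem bisimilar_graft : Bisimilar M (M.graft w l) w (.inl (unravelBRoot M w l)) := by
  refine ⟨fun x g => (∃ s, g = .inl s ∧ rmap M w s.val = x) ∨ g = .inr x,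
    ⟨⟨w, .inl (unravelBRoot M w l), .inl ⟨_, rfl, rfl⟩⟩, ?_, ?_, ?_⟩, .inl ⟨_, rfl, rfl⟩⟩
  · rintro x _ (⟨s, rfl, rfl⟩ | rfl) p <;> rfl
  · rintro x _ u (⟨s, rfl, rfl⟩ | rfl) hu
    · by_cases hs : s.val.length ≤ l
      · obtain ⟨t, ht, hrmap⟩ := unravelB_exists_rel s hs hu
        exact ⟨Sum.inl ∘ t, .inl ⟨t, rfl, ht⟩, fun j => ⟨j, .inl ⟨t j, rfl, hrmap j⟩⟩⟩
      · have hleaf : s.val.length = l + 1 := by have := s.prop.2; omega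
        exact ⟨Sum.inr ∘ u, .inr ⟨hleaf, u, rfl, hu⟩, fun j => ⟨j, .inr rfl⟩⟩
    · exact ⟨Sum.inr ∘ u, ⟨u, rfl, hu⟩, fun j => ⟨j, .inr rfl⟩⟩
  · rintro x _ _ (⟨s, rfl, rfl⟩ | rfl) hR
    · rcases hR with ⟨t, rfl, ht⟩ | ⟨-, u, rfl, hu⟩
      · exact ⟨_, ht.1, fun i => ⟨i, .inl ⟨t i, rfl, rfl⟩⟩⟩
      · exact ⟨u, hu, fun i => ⟨i, .inr rfl⟩⟩
    · obtain ⟨u, rfl, hu⟩ := hR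
      exact ⟨u, hu, fun i => ⟨i, .inr rfl⟩⟩

end Unraveling

section Edges

variable {n : ℕ} {A B : NModel n}

theorem Edge.sum_inl {a a' : A.World} (h : Edge A a a') :
    Edge (A.sum B) (.inl a) (.inl a') := by
  rcases h with ⟨t, ht, i, rfl⟩ | ⟨t, ht, i, rfl⟩
  · exact .inl ⟨Sum.inl ∘ t, ⟨t, rfl, ht⟩, i, rfl⟩
  · exact .inr ⟨Sum.inl ∘ t, ⟨t, rfl, ht⟩, i, rfl⟩

theorem Edge.sum_inr {b b' : B.World} (h : Edge B b b') :
    Edge (A.sum B) (.inr b) (.inr b') := by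
  rcases h with ⟨t, ht, i, rfl⟩ | ⟨t, ht, i, rfl⟩
  · exact .inl ⟨Sum.inr ∘ t, ⟨t, rfl, ht⟩, i, rfl⟩
  · exact .inr ⟨Sum.inr ∘ t, ⟨t, rfl, ht⟩, i, rfl⟩

theorem exists_edge_of_edge_sum_inl {a : A.World} {u : (A.sum B).World}
    (h : Edge (A.sum B) (.inl a) u) : ∃ a', u = .inl a' ∧ Edge A a a' := by
  rcases h with ⟨_, ⟨t, rfl, ht⟩, i, rfl⟩ | ⟨t, hR, i, hi⟩
  · exact ⟨t i, rfl, .inl ⟨t, ht, i, rfl⟩⟩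
  · rcases u with a₀ | b₀
    · obtain ⟨t, rfl, ht⟩ := hR
      exact ⟨a₀, rfl, .inr ⟨t, ht, i, by simpa using hi⟩⟩
    · obtain ⟨t, rfl, -⟩ := hR
      simp at hi

theorem exists_edge_of_edge_sum_inr {b : B.World} {u : (A.sum B).World}
    (h : Edge (A.sum B) (.inr b) u) : ∃ b', u = .inr b' ∧ Edge B b b' := by
  rcases h with ⟨_, ⟨t, rfl, ht⟩, i, rfl⟩ | ⟨t, hR, i, hi⟩
  · exact ⟨t i, rfl, .inl ⟨t, ht, i, rfl⟩⟩
  · rcases u with a₀ | b₀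
    · obtain ⟨t, rfl, -⟩ := hR
      simp at hi
    · obtain ⟨t, rfl, ht⟩ := hR
      exact ⟨b₀, rfl, .inr ⟨t, ht, i, by simpa using hi⟩⟩

theorem exists_dist_le_of_dist_sum_inl_le {a : A.World} {u : (A.sum B).World} {d : ℕ}
    (h : dist (A.sum B) (.inl a) u ≤ d) : ∃ a', u = .inl a' ∧ dist A a a' ≤ d :=
  exists_dist_le_of_dist_map_le (fun _ => 0) (D := d) (fun _ => exists_edge_of_edge_sum_inl)
    (fun _ => by simp) h (by simp)

theorem exists_dist_le_of_dist_sum_inr_le {b : B.World} {u : (A.sum B).World} {d : ℕ}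
    (h : dist (A.sum B) (.inr b) u ≤ d) : ∃ b', u = .inr b' ∧ dist B b b' ≤ d :=
  exists_dist_le_of_dist_map_le (fun _ => 0) (D := d) (fun _ => exists_edge_of_edge_sum_inr)
    (fun _ => by simp) h (by simp)

variable [NeZero n] {M : NModel n} {w : M.World} {l : ℕ}

theorem Edge.graft_inl {s s' : (UnravelB M w l).World} (h : Edge (UnravelB M w l) s s') :
    Edge (M.graft w l) (.inl s) (.inl s') := by
  rcases h with ⟨t, ht, i, rfl⟩ | ⟨t, ht, i, rfl⟩
  · exact .inl ⟨Sum.inl ∘ t, .inl ⟨t, rfl, ht⟩, i, rfl⟩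
  · exact .inr ⟨Sum.inl ∘ t, .inl ⟨t, rfl, ht⟩, i, rfl⟩

theorem exists_edge_of_edge_graft_inl {s : (UnravelB M w l).World} (hs : s.val.length ≤ l)
    {u : (M.graft w l).World} (h : Edge (M.graft w l) (.inl s) u) :
    ∃ s', u = .inl s' ∧ Edge (UnravelB M w l) s s' := by
  rcases h with ⟨_, ⟨t, rfl, ht⟩ | ⟨hleaf, -⟩, i, rfl⟩ | ⟨t, hR, i, hi⟩
  · exact ⟨t i, rfl, .inl ⟨t, ht, i, rfl⟩⟩
  · omega
  · rcases u with s₀ | x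
    · rcases hR with ⟨t, rfl, ht⟩ | ⟨-, t, rfl, -⟩
      · exact ⟨s₀, rfl, .inr ⟨t, ht, i, by simpa using hi⟩⟩
      · simp at hi
    · obtain ⟨t, rfl, -⟩ := hR
      simp at hi

theorem exists_dist_le_of_dist_graft_inl_le {s : (UnravelB M w l).World} {u : (M.graft w l).World}
    {d : ℕ} (h : dist (M.graft w l) (.inl s) u ≤ d) (hd : s.val.length + d ≤ l + 1) :
    ∃ s', u = .inl s' ∧ dist (UnravelB M w l) s s' ≤ d :=
  exists_dist_le_of_dist_map_le (fun s : (UnravelB M w l).World => s.val.length)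
    (fun hs hu => exists_edge_of_edge_graft_inl hs hu) unravelB_length_le_of_edge h hd

end Edges

section TreeComparison

variable {n : ℕ} [NeZero n]

/-- Inside `C = (M.graft w l).sum (UnravelB M w l)`, a node of the unraveling and its copy in
the graft correspond as long as their `2 ^ r`-neighbourhoods do not reach the leaves. -/
def graftTwin (M : NModel n) (w : M.World) (l r : ℕ)
    (x y : ((M.graft w l).sum (UnravelB M w l)).World) : Prop :=
  ∃ s : (UnravelB M w l).World, x = .inl (.inl s) ∧ y = .inr s ∧ s.val.length + 2 ^ r ≤ l + 1

theorem localIso_graftTwin (M : NModel n) (w : M.World) (l : ℕ) :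
    LocalIso ((M.graft w l).sum (UnravelB M w l)) (graftTwin M w l) where
  val_iff := by
    rintro r _ _ ⟨s, rfl, rfl, -⟩ p
    rfl
  eq_iff := by
    rintro r _ _ _ _ ⟨s, rfl, rfl, -⟩ ⟨s', rfl, rfl, -⟩
    simp
  rel_iff := by
    rintro r _ _ xs ys ⟨s, rfl, rfl, hs⟩ hxs
    choose ss hx hy _ using hxs
    obtain rfl : xs = fun i => .inl (.inl (ss i)) := funext hx
    obtain rfl : ys = fun i => .inr (ss i) := funext hy
    constructor
    · rintro ⟨_, hg, ⟨t, rfl, ht⟩ | ⟨hleaf, -⟩⟩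
      · have : t = ss := funext fun i => by simpa using (congrFun hg i).symm
        exact ⟨ss, rfl, this ▸ ht⟩
      · have := Nat.one_le_two_pow (n := r)
        omega
    · rintro ⟨t, ht, hR⟩
      have : t = ss := funext fun i => by simpa using (congrFun ht i).symm
      exact ⟨_, rfl, .inl ⟨ss, rfl, this ▸ hR⟩⟩
  mono := by
    rintro r _ _ ⟨s, rfl, rfl, hs⟩
    have : 2 ^ r ≤ 2 ^ (r + 1) := Nat.pow_le_pow_right two_pos (by omega)
    exact ⟨s, rfl, rfl, by omega⟩
  forth := by
    rintro r _ _ x' ⟨s, rfl, rfl, hs⟩ hd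
    have hpow : 2 ^ (r + 1) = 2 ^ r + 2 ^ r := by rw [pow_succ, mul_two]
    have := Nat.one_le_two_pow (n := r)
    obtain ⟨g, rfl, hg⟩ := exists_dist_le_of_dist_sum_inl_le hd
    obtain ⟨s', rfl, hs'⟩ := exists_dist_le_of_dist_graft_inl_le hg (by omega)
    have := depth_le_of_dist_le (fun s : (UnravelB M w l).World => s.val.length)
      unravelB_length_le_of_edge hs'
    exact ⟨.inr s', ⟨s', rfl, rfl, by omega⟩, dist_map_le Edge.sum_inr hs'⟩
  back := by
    rintro r _ _ y' ⟨s, rfl, rfl, hs⟩ hd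
    have hpow : 2 ^ (r + 1) = 2 ^ r + 2 ^ r := by rw [pow_succ, mul_two]
    obtain ⟨s', rfl, hs'⟩ := exists_dist_le_of_dist_sum_inr_le hd
    have := depth_le_of_dist_le (fun s : (UnravelB M w l).World => s.val.length)
      unravelB_length_le_of_edge hs'
    exact ⟨.inl (.inl s'), ⟨s', rfl, rfl, by omega⟩,
      dist_map_le Edge.sum_inl (dist_map_le Edge.graft_inl hs')⟩

theorem unravelB_forth {K l : ℕ} {M N : NModel n} {w : M.World} {v : N.World}
    {s : (UnravelB M w l).World} {t : (UnravelB N v l).World} (hlen : s.val.length = t.val.length)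
    (hty : typeOf K M (l + 1 - s.val.length) (rmap M w s.val) =
      typeOf K N (l + 1 - s.val.length) (rmap N v t.val))
    {s' : Fin n → (UnravelB M w l).World} (hs' : (UnravelB M w l).R s s') :
    ∃ t' : Fin n → (UnravelB N v l).World, (UnravelB N v l).R t t' ∧ ∀ j, ∃ i,
      (s' i).val.length = (t' j).val.length ∧
      typeOf K M (l + 1 - (s' i).val.length) (rmap M w (s' i).val) =
        typeOf K N (l + 1 - (s' i).val.length) (rmap N v (t' j).val) := by
  have hs := unravelB_length_le_of_rel hs'
  obtain ⟨d, hd⟩ : ∃ d, l + 1 - s.val.length = d + 1 := ⟨l - s.val.length, by omega⟩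
  rw [hd] at hty
  have hA : {c | ∃ i, typeOf K M d (rmap M w (s' i).val) = c} ∈
      (typeOf K M (d + 1) (rmap M w s.val)).2 := ⟨_, hs'.1, fun i => ⟨i, rfl⟩⟩
  rw [hty] at hA
  obtain ⟨u, hu, htypes⟩ := hA
  obtain ⟨t', ht', hrmap⟩ := unravelB_exists_rel t (by omega) hu
  refine ⟨t', ht', fun j => ?_⟩
  obtain ⟨i, hi⟩ := htypes j
  refine ⟨i, by rw [unravelB_length_of_rel hs', unravelB_length_of_rel ht', hlen], ?_⟩
  rw [unravelB_length_of_rel hs', hrmap, show l + 1 - (s.val.length + 1) = d by omega, hi]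

theorem bisimilar_unravelB_of_typeOf_eq {K l : ℕ} {M N : NModel n}
    (hM : ∀ x p, M.V x p → p < K) (hN : ∀ y p, N.V y p → p < K) {w : M.World} {v : N.World}
    (h : typeOf K M l w = typeOf K N l v) :
    Bisimilar (UnravelB M w l) (UnravelB N v l) (unravelBRoot M w l) (unravelBRoot N v l) := by
  have hroot : typeOf K M (l + 1 - 1) w = typeOf K N (l + 1 - 1) v := by simpa using h
  refine ⟨fun s t => s.val.length = t.val.length ∧
    typeOf K M (l + 1 - s.val.length) (rmap M w s.val) =
      typeOf K N (l + 1 - s.val.length) (rmap N v t.val),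
    ⟨⟨unravelBRoot M w l, unravelBRoot N v l, rfl, hroot⟩, ?_, ?_, ?_⟩, rfl, hroot⟩
  · rintro s t ⟨-, hty⟩ p
    by_cases hp : p < K
    · exact typeOf_val_iff hty ⟨p, hp⟩
    · exact iff_of_false (mt (hM _ p) hp) (mt (hN _ p) hp)
  · rintro s t s' ⟨hlen, hty⟩ hs'
    exact unravelB_forth hlen hty hs'
  · rintro s t t' ⟨hlen, hty⟩ ht'
    obtain ⟨s', hs', hmatch⟩ := unravelB_forth hlen.symm (hlen ▸ hty.symm) ht'
    exact ⟨s', hs', fun i => (hmatch i).imp fun j ⟨h₁, h₂⟩ => ⟨h₁.symm, h₁ ▸ h₂.symm⟩⟩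

end TreeComparison

section Characterization

variable {n : ℕ} [NeZero n] {α : FO n 1}

theorem realize_iff_realize_unravelB (hα : BisimInvariantFin n α) (M : NModel n) [Finite M.World]
    (w : M.World) :
    FO.Realize M α (fun _ => w) ↔
      FO.Realize (UnravelB M w (2 ^ α.qr)) α (fun _ => unravelBRoot M w (2 ^ α.qr)) := by
  have hroot : graftTwin M w (2 ^ α.qr) α.qr (.inl (.inl (unravelBRoot M w _)))
      (.inr (unravelBRoot M w _)) := ⟨_, rfl, rfl, by simp [unravelBRoot, Nat.add_comm]⟩
  calc FO.Realize M α (fun _ => w)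
      ↔ FO.Realize (M.graft w (2 ^ α.qr)) α (fun _ => .inl (unravelBRoot M w _)) :=
      realize_iff_of_bisimilar hα bisimilar_graft
    _ ↔ FO.Realize (((M.graft w _).sum (UnravelB M w _)).copies (α.qr + 1)) α
          (fun _ => (.inl (.inl (unravelBRoot M w _)), 0)) :=
      realize_iff_of_bisimilar hα ((bisimilar_sum_inl _ _ _).trans (bisimilar_copies _ _ _ 0))
    _ ↔ FO.Realize (((M.graft w _).sum (UnravelB M w _)).copies (α.qr + 1)) α
          (fun _ => (.inr (unravelBRoot M w _), 0)) :=
      (localIso_graftTwin M w _).realize_copies_iff hroot α le_rfl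
    _ ↔ _ := (realize_iff_of_bisimilar hα
        ((bisimilar_sum_inr _ _ _).trans (bisimilar_copies _ _ _ 0))).symm

theorem realize_iff_of_typeOf_eq (hα : BisimInvariantFin n α) {M N : NModel n} [Finite M.World]
    [Finite N.World] {w : M.World} {v : N.World}
    (h : typeOf α.letterBound M (2 ^ α.qr) w = typeOf α.letterBound N (2 ^ α.qr) v) :
    FO.Realize M α (fun _ => w) ↔ FO.Realize N α (fun _ => v) := by
  have htrees := bisimilar_unravelB_of_typeOf_eq (M := M.restrict _) (N := N.restrict _)
    (fun _ _ h => h.1) (fun _ _ h => h.1)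
    ((typeOf_restrict _ _ M w).trans (h.trans (typeOf_restrict _ _ N v).symm))
  calc FO.Realize M α (fun _ => w)
      ↔ FO.Realize (M.restrict α.letterBound) α (fun _ => w) :=
      (FO.realize_restrict α le_rfl _).symm
    _ ↔ _ := realize_iff_realize_unravelB hα (M.restrict α.letterBound) w
    _ ↔ _ := realize_iff_of_bisimilar hα htrees
    _ ↔ FO.Realize (N.restrict α.letterBound) α (fun _ => v) :=
      (realize_iff_realize_unravelB hα (N.restrict α.letterBound) v).symm
    _ ↔ FO.Realize N α (fun _ => v) := FO.realize_restrict α le_rfl _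

end Characterization

/-- Rosen-style characterization of WAML^n over finite n-models. -/
theorem rosen_characterization (n : ℕ) (hn : 1 ≤ n) (α : FO n 1) :
    BisimInvariantFin n α ↔
    ∃ φ : Formula, ∀ (M : NModel n) (w : M.World), Finite M.World →
      (FO.Realize M α (fun _ => w) ↔ FO.Realize M (ST n φ) (fun _ => w)) := by
  have : NeZero n := ⟨by omega⟩
  constructor
  · intro hα
    obtain ⟨φ, hφ⟩ := exists_formula_of_typeOf_congr α.letterBound (2 ^ α.qr)
      (fun M w => FO.Realize M α fun _ => w)
      fun M N _ _ _ _ h => (realize_iff_of_typeOf_eq hα h).mpr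
    exact ⟨φ, fun M w hM => (hφ M w hM).trans (realize_ST φ fun _ => w).symm⟩
  · rintro ⟨φ, hφ⟩ M N Z w v hM hN hZ hwv
    rw [hφ M w hM, hφ N v hN, realize_ST, realize_ST]
    exact sat_iff_of_isBisim hZ φ hwv

end WAML
end

section
/- Let n ≥ 3 and let ρ₁,…,ρ_{n−1} be conjunctions of literals over propositional letters r₁,…,r_m (distinct from p and q) such that ρ_i ∧ ρ_{i'} is propositionally unsatisfiable whenever i ≠ i'. Then 𝕂_n ⊢ (□(p ∧ ¬q) ∧ □(p ∧ q) ∧ ⋀_{i=1}^{n−1} □(¬p ∧ ρ_i)) → □⊥. -/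
namespace WAML

/-!
The `n + 1` formulas `p ∧ ¬q`, `p ∧ q`, `¬p ∧ ρ₁`, …, `¬p ∧ ρₙ₋₁` are pairwise propositionally
incompatible, so every disjunct of the consequent of the Kₙ instance on them is a contradiction,
and RM turns that consequent into `□⊥`.
-/

def IsValuation (v : Formula → Prop) : Prop :=
  (∀ ψ, v (Formula.neg ψ) ↔ ¬ v ψ) ∧ (∀ ψ χ, v (Formula.and ψ χ) ↔ v ψ ∧ v χ)

namespace IsValuation

variable {v : Formula → Prop} (hv : IsValuation v)
include hv

lemma neg (φ : Formula) : v (Formula.neg φ) ↔ ¬ v φ := hv.1 φ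

lemma and (φ ψ : Formula) : v (Formula.and φ ψ) ↔ v φ ∧ v ψ := hv.2 φ ψ

lemma imp (φ ψ : Formula) : v (Formula.imp φ ψ) ↔ (v φ → v ψ) := by
  simp only [Formula.imp, hv.neg, hv.and]; tauto

lemma or (φ ψ : Formula) : v (Formula.or φ ψ) ↔ v φ ∨ v ψ := by
  simp only [Formula.or, hv.neg, hv.and]; tauto

lemma not_bot : ¬ v Formula.bot := by
  simp only [Formula.bot, hv.and, hv.neg]; tauto

lemma conjList : ∀ L : List Formula, v (conjList L) ↔ ∀ φ ∈ L, v φ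
  | [] => by simpa [WAML.conjList, hv.neg] using hv.not_bot
  | [φ] => by simp [WAML.conjList]
  | φ :: ψ :: rest => by
    rw [WAML.conjList, hv.and, conjList (ψ :: rest)]
    exact List.forall_mem_cons.symm

lemma disjList : ∀ L : List Formula, v (disjList L) ↔ ∃ φ ∈ L, v φ
  | [] => by simpa [WAML.disjList] using hv.not_bot
  | [φ] => by simp [WAML.disjList]
  | φ :: ψ :: rest => by
    rw [WAML.disjList, hv.or, disjList (ψ :: rest)]
    exact (List.exists_mem_cons_iff _ _ _).symm

end IsValuation

lemma tautology_iff {φ : Formula} : Tautology φ ↔ ∀ v, IsValuation v → v φ :=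
  ⟨fun h v hv => h v hv.1 hv.2, fun h v hneg hand => h v ⟨hneg, hand⟩⟩

lemma tautology_neg_and_iff {φ ψ : Formula} :
    Tautology (Formula.neg (Formula.and φ ψ)) ↔ ∀ v, IsValuation v → v φ → ¬ v ψ := by
  simp only [tautology_iff]
  exact forall₂_congr fun v hv => by rw [hv.neg, hv.and, not_and]

lemma KProof.imp_trans {n : ℕ} {φ ψ χ : Formula}
    (h₁ : KProof n (Formula.imp φ ψ)) (h₂ : KProof n (Formula.imp ψ χ)) :
    KProof n (Formula.imp φ χ) := by
  have syllogism : Tautology (Formula.imp (Formula.imp φ ψ)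
      (Formula.imp (Formula.imp ψ χ) (Formula.imp φ χ))) :=
    tautology_iff.2 fun v hv => by simp only [hv.imp]; tauto
  exact .mp (.mp (.taut syllogism) h₁) h₂

lemma tautology_imp_bot_pairDisj {n : ℕ} {φ : Fin (n + 1) → Formula}
    (hφ : ∀ i j, i < j → Tautology (Formula.neg (Formula.and (φ i) (φ j)))) :
    Tautology (Formula.imp (pairDisj n φ) Formula.bot) := by
  refine tautology_iff.2 fun v hv => (hv.imp _ _).2 fun hdisj => ?_
  obtain ⟨ψ, hψ, hvψ⟩ := (hv.disjList _).1 hdisj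
  obtain ⟨⟨i, j⟩, -, hij⟩ := List.mem_filterMap.1 hψ
  split_ifs at hij with hlt
  cases hij
  rw [hv.and] at hvψ
  exact (tautology_neg_and_iff.1 (hφ i j hlt) v hv hvψ.1 hvψ.2).elim

lemma KProof.box_bot_of_pairwise_incompatible {n : ℕ} (φ : Fin (n + 1) → Formula)
    (hφ : ∀ i j, i < j → Tautology (Formula.neg (Formula.and (φ i) (φ j)))) :
    KProof n (Formula.imp (conjList ((List.finRange (n + 1)).map fun i => Formula.box (φ i)))
      (Formula.box Formula.bot)) :=
  KProof.imp_trans (.kn φ) (.rm (.taut (tautology_imp_bot_pairDisj hφ)))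

def counterexampleFamily {n : ℕ} (ρ : Fin (n - 1) → Formula) : Fin (n + 1) → Formula
  | ⟨0, _⟩ => Formula.and (Formula.atom 0) (Formula.neg (Formula.atom 1))
  | ⟨1, _⟩ => Formula.and (Formula.atom 0) (Formula.atom 1)
  | ⟨k + 2, hk⟩ => Formula.and (Formula.neg (Formula.atom 0)) (ρ ⟨k, by omega⟩)

lemma counterexampleFamily_pairwise_incompatible {n : ℕ} (ρ : Fin (n - 1) → Formula)
    (hρ : ∀ i i', i ≠ i' → Tautology (Formula.neg (Formula.and (ρ i) (ρ i'))))
    (i j : Fin (n + 1)) (hij : i < j) :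
    Tautology (Formula.neg
      (Formula.and (counterexampleFamily ρ i) (counterexampleFamily ρ j))) := by
  refine tautology_neg_and_iff.2 fun v hv hi hj => ?_
  obtain ⟨i, hi'⟩ := i
  obtain ⟨j, hj'⟩ := j
  rw [Fin.mk_lt_mk] at hij
  match i, j, hij with
  | 0, 1, _ =>
    simp only [counterexampleFamily, hv.and, hv.neg] at hi hj
    exact hi.2 hj.2
  | 0, _ + 2, _ | 1, _ + 2, _ =>
    simp only [counterexampleFamily, hv.and, hv.neg] at hi hj
    exact hj.1 hi.1
  | k + 2, l + 2, hkl =>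
    simp only [counterexampleFamily, hv.and] at hi hj
    have hne : (⟨k, by omega⟩ : Fin (n - 1)) ≠ ⟨l, by omega⟩ := by
      simp only [ne_eq, Fin.mk.injEq]; omega
    exact tautology_neg_and_iff.1 (hρ _ _ hne) v hv hi.2 hj.2

lemma tautology_imp_boxes_counterexampleFamily {n : ℕ} (ρ : Fin (n - 1) → Formula) :
    Tautology (Formula.imp
      (Formula.and (Formula.and
        (Formula.box (Formula.and (Formula.atom 0) (Formula.neg (Formula.atom 1))))
        (Formula.box (Formula.and (Formula.atom 0) (Formula.atom 1))))
        (conjList ((List.finRange (n - 1)).map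
          (fun i => Formula.box (Formula.and (Formula.neg (Formula.atom 0)) (ρ i))))))
      (conjList ((List.finRange (n + 1)).map
        fun i => Formula.box (counterexampleFamily ρ i)))) := by
  refine tautology_iff.2 fun v hv => (hv.imp _ _).2 fun h => ?_
  simp only [hv.and, hv.conjList, List.forall_mem_map, List.mem_finRange, forall_const] at h ⊢
  obtain ⟨⟨hpnq, hpq⟩, hρ⟩ := h
  rintro ⟨_ | _ | k, hk⟩
  exacts [hpnq, hpq, hρ ⟨k, by omega⟩]

theorem general_counterexample_derivation_general (n : ℕ)
    (ρ : Fin (n-1) → Formula)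
    (hincomp : ∀ i i', i ≠ i' → Tautology (Formula.neg (Formula.and (ρ i) (ρ i')))) :
    KProof n (Formula.imp
      (Formula.and (Formula.and
        (Formula.box (Formula.and (Formula.atom 0) (Formula.neg (Formula.atom 1))))
        (Formula.box (Formula.and (Formula.atom 0) (Formula.atom 1))))
        (conjList ((List.finRange (n-1)).map
          (fun i => Formula.box (Formula.and (Formula.neg (Formula.atom 0)) (ρ i))))))
      (Formula.box Formula.bot)) :=
  KProof.imp_trans (.taut (tautology_imp_boxes_counterexampleFamily ρ))
    (KProof.box_bot_of_pairwise_incompatible _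
      (counterexampleFamily_pairwise_incompatible ρ hincomp))

/-- for n ≥ 3 and pairwise propositionally incompatible conjunctions of
literals ρ₁,…,ρ_{n−1} over r₁,…,r_m (atoms 2,…,m+1, distinct from p = atom 0 and
q = atom 1), 𝕂_n derives (□(p ∧ ¬q) ∧ □(p ∧ q) ∧ ⋀ᵢ □(¬p ∧ ρᵢ)) → □⊥. -/
theorem general_counterexample_derivation (n m : ℕ) (hn : 3 ≤ n)
    (ρ : Fin (n-1) → Formula)
    (hlits : ∀ i, IsConjLits m (ρ i))
    (hincomp : ∀ i i', i ≠ i' → Tautology (Formula.neg (Formula.and (ρ i) (ρ i')))) :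
    KProof n (Formula.imp
      (Formula.and (Formula.and
        (Formula.box (Formula.and (Formula.atom 0) (Formula.neg (Formula.atom 1))))
        (Formula.box (Formula.and (Formula.atom 0) (Formula.atom 1))))
        (conjList ((List.finRange (n-1)).map
          (fun i => Formula.box (Formula.and (Formula.neg (Formula.atom 0)) (ρ i))))))
      (Formula.box Formula.bot)) :=
  general_counterexample_derivation_general n ρ hincomp

end WAML
end
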